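/- arXiv:1902.03195 — 2 statements merged into one kernel-verified Lean document; each statement's English description precedes it below -/
import Mathlib

section
/- Define P : ℕ × ℕ → ℚ by P(1,0) = 1, P(n,0) = P(n-1,0)/n and P(n,n-1) = P(n-1,n-2)/n for n ≥ 2, and P(n,k) = ((n-k)/n)·P(n-1,k-1) + ((k+1)/n)·P(n-1,k) for n ≥ 2 and 1 ≤ k ≤ n-2. Then P(n,k) = A(n,k)/n! for all n ≥ 1 and 0 ≤ k ≤ n-1, where A(n,k) is the Eulerian number. -/
open scoped Classical

/-- The number of descents of a permutation `w` of `Fin n`. -/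
noncomputable def descents (n : ℕ) (w : Equiv.Perm (Fin n)) : ℕ :=
  (Finset.univ.filter fun i : Fin n =>
    ∃ h : (i : ℕ) + 1 < n, w ⟨(i : ℕ) + 1, h⟩ < w i).card

/-- The Eulerian number `A(n,k)`: permutations of `{1,…,n}` with exactly `k` descents. -/
noncomputable def eulerian (n k : ℕ) : ℕ :=
  (Finset.univ.filter fun w : Equiv.Perm (Fin n) => descents n w = k).card

namespace IDLA
open Finset Equiv
variable {n : ℕ}

noncomputable def dSet (n : ℕ) (w : Equiv.Perm (Fin n)) : Finset (Fin n) :=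
  Finset.univ.filter fun i : Fin n => ∃ h : (i : ℕ) + 1 < n, w ⟨(i : ℕ) + 1, h⟩ < w i

lemma descents_eq (w : Equiv.Perm (Fin n)) : descents n w = (dSet n w).card := rfl

lemma mem_dSet {w : Equiv.Perm (Fin n)} {i : Fin n} :
    i ∈ dSet n w ↔ ∃ h : (i : ℕ) + 1 < n, w ⟨(i : ℕ) + 1, h⟩ < w i := by
  simp [dSet]

noncomputable def ins (p : Fin (n+1)) (w : Equiv.Perm (Fin n)) : Equiv.Perm (Fin (n+1)) :=
  (finSuccEquiv' p).trans ((w.optionCongr).trans (finSuccEquiv' (Fin.last n)).symm)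

lemma ins_self (p : Fin (n+1)) (w : Equiv.Perm (Fin n)) : ins p w p = Fin.last n := by
  simp [ins]

lemma ins_succAbove (p : Fin (n+1)) (w : Equiv.Perm (Fin n)) (j : Fin n) :
    ins p w (p.succAbove j) = (w j).castSucc := by
  simp [ins, Fin.succAbove_last]

lemma ins_lt (p : Fin (n+1)) (w : Equiv.Perm (Fin n)) {j : Fin n} (hj : j.castSucc < p) :
    ins p w j.castSucc = (w j).castSucc := by
  rw [← Fin.succAbove_of_castSucc_lt p j hj, ins_succAbove]

lemma ins_ge (p : Fin (n+1)) (w : Equiv.Perm (Fin n)) {j : Fin n} (hj : p ≤ j.castSucc) :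
    ins p w j.succ = (w j).castSucc := by
  rw [← Fin.succAbove_of_le_castSucc p j hj, ins_succAbove]

noncomputable def psi (p : Fin (n+1)) (d : Fin n) : Fin (n+1) :=
  if d.castSucc < p then d.castSucc else d.succ

lemma psi_val (p : Fin (n+1)) (d : Fin n) :
    (psi p d : ℕ) = if (d : ℕ) < (p : ℕ) then (d : ℕ) else (d : ℕ) + 1 := by
  unfold psi
  split_ifs with h1 h2 h3 <;> simp_all [Fin.lt_def, Fin.castSucc, Fin.succ]

lemma psi_inj (p : Fin (n+1)) : Function.Injective (psi p) := by
  intro a b hab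
  have := congrArg (Fin.val) hab
  rw [psi_val, psi_val] at this
  apply Fin.ext
  split_ifs at this <;> omega

lemma dSet_ins (p : Fin (n+1)) (w : Equiv.Perm (Fin n)) :
    dSet (n+1) (ins p w) =
      ((dSet n w).filter (fun d => d.succ ≠ p)).image (psi p) ∪
        (if p = Fin.last n then (∅ : Finset (Fin (n+1))) else {p}) := by
  ext i
  simp only [mem_dSet, mem_union, mem_image, mem_filter]
  constructor
  · rintro ⟨h, hv⟩
    have hi : (i : ℕ) < n := by omega
    set j : Fin n := ⟨(i : ℕ), hi⟩ with hj
    have hij : j.castSucc = i := by ext; simp [hj]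
    rcases lt_trichotomy i p with hip | hip | hip
    · -- i < p
      have hip' : (i : ℕ) < (p : ℕ) := hip
      have hvi : ins p w i = (w j).castSucc := by
        rw [← hij]; exact ins_lt p w (by rwa [hij])
      by_cases hpe : (i : ℕ) + 1 = (p : ℕ)
      · exfalso
        have : (⟨(i : ℕ) + 1, h⟩ : Fin (n+1)) = p := by ext; simp [hpe]
        rw [this, ins_self, hvi] at hv
        exact (Fin.castSucc_lt_last (w j)).asymm hv
      · have hlt : (i : ℕ) + 1 < (p : ℕ) := by omega
        have hn : (i : ℕ) + 1 < n := by have := p.isLt; omega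
        set j' : Fin n := ⟨(i : ℕ) + 1, hn⟩ with hj'
        have hcs : (⟨(i : ℕ) + 1, h⟩ : Fin (n+1)) = j'.castSucc := by ext; simp [hj']
        have hvj' : ins p w j'.castSucc = (w j').castSucc :=
          ins_lt p w (by simp [Fin.lt_def, hj', hlt])
        rw [hcs, hvj', hvi] at hv
        have hww : w j' < w j := Fin.castSucc_lt_castSucc_iff.mp hv
        refine Or.inl ⟨j, ⟨⟨hn, hww⟩, ?_⟩, ?_⟩
        · intro hc
          apply hpe
          have := congrArg Fin.val hc
          simpa [hj] using this
        · unfold psi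
          rw [if_pos (by rwa [hij]), hij]
    · -- i = p
      refine Or.inr ?_
      have hpl : p ≠ Fin.last n := by
        intro hc
        rw [← hip] at hc
        have := congrArg Fin.val hc
        simp at this
        omega
      rw [if_neg hpl]
      simp [hip]
    · -- p < i
      have hip' : (p : ℕ) < (i : ℕ) := hip
      have h1 : (i : ℕ) - 1 < n := by omega
      set j' : Fin n := ⟨(i : ℕ) - 1, h1⟩ with hj'
      have hsj' : j'.succ = i := by ext; simp [hj']; omega
      have hpj' : p ≤ j'.castSucc := by
        rw [Fin.le_def]; simp [hj']; omega
      have hvi : ins p w i = (w j').castSucc := by rw [← hsj']; exact ins_ge p w hpj'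
      have hcs : (⟨(i : ℕ) + 1, h⟩ : Fin (n+1)) = j.succ := by ext; simp [hj]
      have hvj : ins p w j.succ = (w j).castSucc := by
        apply ins_ge; rw [Fin.le_def]; simp [hj]; omega
      rw [hcs, hvj, hvi] at hv
      have hww : w j < w j' := Fin.castSucc_lt_castSucc_iff.mp hv
      have hJ : (j' : ℕ) + 1 < n := by simp [hj']; omega
      refine Or.inl ⟨j', ⟨⟨hJ, ?_⟩, ?_⟩, ?_⟩
      · have : (⟨(j' : ℕ) + 1, hJ⟩ : Fin n) = j := by ext; simp [hj', hj]; omega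
        rwa [this]
      · rw [hsj']; exact Fin.ne_of_gt hip
      · unfold psi
        rw [if_neg (not_lt.mpr hpj'), hsj']
  · rintro (⟨d, ⟨⟨hd, hw⟩, hdp⟩, rfl⟩ | hmem)
    · by_cases hc : d.castSucc < p
      · have hval : psi p d = d.castSucc := if_pos hc
        have hdlt : (d : ℕ) + 1 < (p : ℕ) := by
          have h1 : (d : ℕ) < (p : ℕ) := hc
          have h2 : (d : ℕ) + 1 ≠ (p : ℕ) := by
            intro hcon; apply hdp; ext; simpa using hcon
          omega
        have hh : ((psi p d : ℕ)) + 1 < n + 1 := by rw [hval]; simp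
        refine ⟨hh, ?_⟩
        set d' : Fin n := ⟨(d : ℕ) + 1, hd⟩ with hd'
        have e1 : (⟨((psi p d : ℕ)) + 1, hh⟩ : Fin (n+1)) = d'.castSucc := by
          ext; simp [hval, hd']
        rw [e1, hval]
        rw [ins_lt p w (show d'.castSucc < p by simp [Fin.lt_def, hd']; omega),
          ins_lt p w hc]
        exact Fin.castSucc_lt_castSucc_iff.mpr hw
      · have hval : psi p d = d.succ := if_neg hc
        have hple : p ≤ d.castSucc := not_lt.mp hc
        have hh : ((psi p d : ℕ)) + 1 < n + 1 := by rw [hval]; simp; omega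
        refine ⟨hh, ?_⟩
        set d' : Fin n := ⟨(d : ℕ) + 1, hd⟩ with hd'
        have e1 : (⟨((psi p d : ℕ)) + 1, hh⟩ : Fin (n+1)) = d'.succ := by
          ext; simp [hval, hd']
        rw [e1, hval]
        rw [ins_ge p w (show p ≤ d'.castSucc from le_trans hple (by simp [Fin.le_def, hd'])),
          ins_ge p w hple]
        exact Fin.castSucc_lt_castSucc_iff.mpr hw
    · by_cases hpl : p = Fin.last n
      · rw [if_pos hpl] at hmem; exact absurd hmem (notMem_empty i)
      · rw [if_neg hpl, mem_singleton] at hmem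
        subst hmem
        have hplt : (i : ℕ) < n := by
          rcases Fin.lt_last_iff_ne_last.mpr hpl with h
          exact h
        have hh : (i : ℕ) + 1 < n + 1 := by omega
        refine ⟨hh, ?_⟩
        set j : Fin n := ⟨(i : ℕ), hplt⟩ with hj
        have e1 : (⟨(i : ℕ) + 1, hh⟩ : Fin (n+1)) = j.succ := by ext; simp [hj]
        rw [e1, ins_ge i w (by rw [Fin.le_def]; simp [hj]), ins_self]
        exact Fin.castSucc_lt_last (w j)


noncomputable def Tset (w : Equiv.Perm (Fin n)) : Finset (Fin (n+1)) :=
  insert (Fin.last n) ((dSet n w).image Fin.succ)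

lemma last_not_mem_image (w : Equiv.Perm (Fin n)) :
    Fin.last n ∉ (dSet n w).image Fin.succ := by
  simp only [mem_image, not_exists]
  rintro d ⟨hd, hc⟩
  obtain ⟨h1, -⟩ := mem_dSet.mp hd
  have := congrArg Fin.val hc
  simp at this
  omega

lemma card_Tset (w : Equiv.Perm (Fin n)) : (Tset w).card = descents n w + 1 := by
  rw [Tset, card_insert_of_notMem (last_not_mem_image w),
    card_image_of_injective _ (Fin.succ_injective n), descents_eq]

lemma mem_Tset {w : Equiv.Perm (Fin n)} {p : Fin (n+1)} :
    p ∈ Tset w ↔ p = Fin.last n ∨ ∃ d ∈ dSet n w, d.succ = p := by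
  simp [Tset]

lemma descents_ins (p : Fin (n+1)) (w : Equiv.Perm (Fin n)) :
    descents (n+1) (ins p w) = descents n w + (if p ∈ Tset w then 0 else 1) := by
  classical
  rw [descents_eq, dSet_ins, descents_eq]
  set S := dSet n w with hS
  set A := S.filter (fun d => d.succ = p) with hA
  set B := S.filter (fun d => d.succ ≠ p) with hB
  have hAB : A.card + B.card = S.card := card_filter_add_card_filter_not _
  have hBcard : (B.image (psi p)).card = B.card := card_image_of_injective _ (psi_inj p)
  by_cases hpl : p = Fin.last n
  · have hA0 : A.card = 0 := by
      rw [Finset.card_eq_zero, hA, filter_eq_empty_iff]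
      intro d hd hc
      obtain ⟨h1, -⟩ := mem_dSet.mp (hS ▸ hd)
      have := congrArg Fin.val hc
      rw [hpl] at this
      simp at this
      omega
    rw [if_pos hpl, union_empty, if_pos (mem_Tset.mpr (Or.inl hpl))]
    omega
  · have hpB : p ∉ B.image (psi p) := by
      simp only [mem_image, not_exists]
      rintro d ⟨hd, hc⟩
      obtain ⟨-, hdp⟩ := mem_filter.mp hd
      unfold psi at hc
      split_ifs at hc with h
      · rw [hc] at h; exact lt_irrefl _ h
      · exact hdp hc
    rw [if_neg hpl, card_union_of_disjoint (disjoint_singleton_right.mpr hpB),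
      card_singleton]
    by_cases hit : p ∈ Tset w
    · rw [if_pos hit]
      rcases mem_Tset.mp hit with h | ⟨d, hd, hdp⟩
      · exact absurd h hpl
      · have hA1 : A.card = 1 := by
          rw [Finset.card_eq_one]
          refine ⟨d, ?_⟩
          ext x
          simp only [hA, mem_filter, mem_singleton]
          constructor
          · rintro ⟨-, hx⟩
            exact Fin.succ_injective n (hx.trans hdp.symm)
          · rintro rfl; exact ⟨hS ▸ hd, hdp⟩
        omega
    · rw [if_neg hit]
      have hA0 : A.card = 0 := by
        rw [Finset.card_eq_zero, hA, filter_eq_empty_iff]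
        intro d hd hc
        exact hit (mem_Tset.mpr (Or.inr ⟨d, hS ▸ hd, hc⟩))
      omega

lemma count_p (w : Equiv.Perm (Fin n)) (K : ℕ) :
    (univ.filter fun p : Fin (n+1) => descents (n+1) (ins p w) = K).card
      = (if descents n w = K then K + 1 else 0)
        + (if descents n w + 1 = K then n + 1 - K else 0) := by
  classical
  have hTcard := card_Tset w
  have hTle : (Tset w).card ≤ n + 1 := le_trans (card_le_card (subset_univ _))
    (by simp)
  have hsplit : ((univ : Finset (Fin (n+1))).filter (fun p => p ∈ Tset w)).card
      + ((univ : Finset (Fin (n+1))).filter (fun p => p ∉ Tset w)).card = n + 1 := by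
    rw [card_filter_add_card_filter_not]
    simp
  have hTeq : (univ : Finset (Fin (n+1))).filter (fun p => p ∈ Tset w) = Tset w := by
    ext p; simp
  by_cases h1 : descents n w = K
  · rw [if_pos h1, if_neg (by omega)]
    have : (univ.filter fun p : Fin (n+1) => descents (n+1) (ins p w) = K)
        = Tset w := by
      ext p
      simp only [mem_filter, mem_univ, true_and, descents_ins]
      split_ifs with h <;> simp [h] <;> omega
    rw [this, hTcard, h1]
  · by_cases h2 : descents n w + 1 = K
    · rw [if_neg h1, if_pos h2]
      have heq : (univ.filter fun p : Fin (n+1) => descents (n+1) (ins p w) = K)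
          = (univ : Finset (Fin (n+1))).filter (fun p => p ∉ Tset w) := by
        ext p
        simp only [mem_filter, mem_univ, true_and, descents_ins]
        split_ifs with h <;> simp [h] <;> omega
      rw [heq]
      rw [hTeq] at hsplit
      omega
    · rw [if_neg h1, if_neg h2]
      have heq : (univ.filter fun p : Fin (n+1) => descents (n+1) (ins p w) = K)
          = ∅ := by
        rw [filter_eq_empty_iff]
        intro p _
        rw [descents_ins]
        split_ifs <;> omega
      rw [heq, card_empty]

lemma ins_injective :
    Function.Injective (fun x : Equiv.Perm (Fin n) × Fin (n+1) => ins x.2 x.1) := by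
  rintro ⟨w, p⟩ ⟨w', p'⟩ h
  simp only at h
  have hp : p = p' := by
    have h1 : ins p w p = Fin.last n := ins_self p w
    have h2 : ins p w p' = Fin.last n := by rw [h]; exact ins_self p' w'
    exact (ins p w).injective (h1.trans h2.symm)
  subst hp
  have hw : w = w' := by
    apply Equiv.ext
    intro j
    have h1 : ins p w (p.succAbove j) = (w j).castSucc := ins_succAbove p w j
    have h2 : ins p w (p.succAbove j) = (w' j).castSucc := by
      rw [h]; exact ins_succAbove p w' j
    exact Fin.castSucc_injective n (h1.symm.trans h2)
  rw [hw]

lemma ins_bijective :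
    Function.Bijective (fun x : Equiv.Perm (Fin n) × Fin (n+1) => ins x.2 x.1) := by
  rw [Fintype.bijective_iff_injective_and_card]
  refine ⟨ins_injective, ?_⟩
  simp [Fintype.card_perm, Nat.factorial_succ, Nat.mul_comm]

lemma card_filter_prod {α β : Type*} [Fintype α] [Fintype β] (Q : α × β → Prop)
    [DecidablePred Q] [∀ a : α, DecidablePred (fun b => Q (a, b))] :
    ((univ : Finset (α × β)).filter Q).card
      = ∑ a : α, ((univ : Finset β).filter fun b => Q (a, b)).card := by
  classical
  rw [Finset.card_eq_sum_card_fiberwise (f := Prod.fst) (t := univ)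
    (fun x _ => mem_univ _)]
  refine Finset.sum_congr rfl fun a _ => ?_
  refine Finset.card_bij (fun x _ => x.2) ?_ ?_ ?_
  · rintro x hx
    simp only [mem_filter, mem_univ, true_and] at hx ⊢
    obtain ⟨hq, hfst⟩ := hx
    subst hfst
    simpa using hq
  · rintro x hx y hy hxy
    simp only [mem_filter, mem_univ, true_and] at hx hy
    exact Prod.ext (hx.2.trans hy.2.symm) hxy
  · rintro b hb
    simp only [mem_filter, mem_univ, true_and] at hb
    exact ⟨(a, b), by simp [hb], rfl⟩

set_option maxHeartbeats 1000000 in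
lemma eulerian_succ_eq_sum (K : ℕ) :
    eulerian (n+1) K = ∑ w : Equiv.Perm (Fin n),
      ((if descents n w = K then K + 1 else 0)
        + (if descents n w + 1 = K then n + 1 - K else 0)) := by
  classical
  have hbij := ins_bijective (n := n)
  have hcard : eulerian (n+1) K
      = ((univ : Finset (Equiv.Perm (Fin n) × Fin (n+1))).filter
          fun x => descents (n+1) (ins x.2 x.1) = K).card := by
    rw [eulerian]
    refine (Finset.card_bij (fun x _ => ins x.2 x.1) ?_ ?_ ?_).symm
    · intro x hx
      simp only [mem_filter, mem_univ, true_and] at hx ⊢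
      exact hx
    · intro x hx y hy hxy
      exact ins_injective hxy
    · intro v hv
      simp only [mem_filter, mem_univ, true_and] at hv
      obtain ⟨x, hx⟩ := hbij.2 v
      have hx' : ins x.2 x.1 = v := hx
      exact ⟨x, by simp only [mem_filter, mem_univ, true_and]; rw [hx']; exact hv, hx'⟩
  rw [hcard]
  exact (card_filter_prod (fun x : Equiv.Perm (Fin n) × Fin (n+1) => descents (n+1) (ins x.2 x.1) = K)).trans (Finset.sum_congr rfl fun w _ => count_p w K)

lemma sum_ite_count (K c : ℕ) :
    (∑ w : Equiv.Perm (Fin n), if descents n w = K then c else 0)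
      = c * eulerian n K := by
  classical
  rw [← Finset.sum_filter, Finset.sum_const, smul_eq_mul, eulerian, Nat.mul_comm]

lemma eulerian_succ_zero : eulerian (n+1) 0 = eulerian n 0 := by
  rw [eulerian_succ_eq_sum]
  have : ∀ w : Equiv.Perm (Fin n),
      ((if descents n w = 0 then 0 + 1 else 0)
        + (if descents n w + 1 = 0 then n + 1 - 0 else 0))
      = (if descents n w = 0 then 1 else 0) := by
    intro w
    rw [if_neg (Nat.succ_ne_zero _)]
    simp
  rw [Finset.sum_congr rfl fun w _ => this w, sum_ite_count 0 1, one_mul]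

lemma eulerian_rec (n k : ℕ) :
    eulerian (n+1) (k+1) = (k+2) * eulerian n (k+1) + (n - k) * eulerian n k := by
  rw [eulerian_succ_eq_sum]
  have : ∀ w : Equiv.Perm (Fin n),
      ((if descents n w = k+1 then k+1+1 else 0)
        + (if descents n w + 1 = k+1 then n + 1 - (k+1) else 0))
      = ((if descents n w = k+1 then k+2 else 0)
        + (if descents n w = k then n - k else 0)) := by
    intro w
    congr 1
    by_cases h : descents n w = k
    · rw [if_pos h, if_pos (by omega)]
      omega
    · rw [if_neg h, if_neg (by omega)]
  rw [Finset.sum_congr rfl fun w _ => this w, Finset.sum_add_distrib,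
    sum_ite_count (k+1) (k+2), sum_ite_count k (n-k)]

lemma eulerian_zero : ∀ n : ℕ, eulerian n 0 = 1 := by
  intro n
  induction n with
  | zero =>
      rw [eulerian]
      have h0 : ∀ w : Equiv.Perm (Fin 0), descents 0 w = 0 := by
        intro w
        rw [descents_eq, dSet]
        simp
      rw [Finset.filter_true_of_mem (fun w _ => h0 w)]
      simp
  | succ m ih => rw [eulerian_succ_zero, ih]

lemma descents_le (w : Equiv.Perm (Fin (n+1))) : descents (n+1) w ≤ n := by
  rw [descents_eq]
  have hsub : dSet (n+1) w ⊆ (univ : Finset (Fin n)).image Fin.castSucc := by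
    intro i hi
    obtain ⟨h, -⟩ := mem_dSet.mp hi
    simp only [mem_image, mem_univ, true_and]
    exact ⟨⟨(i : ℕ), by omega⟩, by ext; simp⟩
  calc (dSet (n+1) w).card ≤ _ := card_le_card hsub
    _ ≤ n := by
        rw [card_image_of_injective _ (Fin.castSucc_injective n)]
        simp

lemma eulerian_diag_zero (n : ℕ) : eulerian (n+1) (n+1) = 0 := by
  rw [eulerian, Finset.card_eq_zero, filter_eq_empty_iff]
  intro w _
  have := descents_le w
  omega

lemma eulerian_last : ∀ n : ℕ, eulerian (n+1) n = 1 := by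
  intro n
  induction n with
  | zero => exact eulerian_zero 1
  | succ m ih =>
      rw [eulerian_rec (m+1) m, eulerian_diag_zero, ih]
      simp

end IDLA

theorem internalDLA_eulerian_distribution (P : ℕ → ℕ → ℚ)
    (hP1 : P 1 0 = 1)
    (hPleft : ∀ n : ℕ, 2 ≤ n → P n 0 = P (n - 1) 0 / n)
    (hPright : ∀ n : ℕ, 2 ≤ n → P n (n - 1) = P (n - 1) (n - 2) / n)
    (hPmid : ∀ n k : ℕ, 2 ≤ n → 1 ≤ k → k ≤ n - 2 →
      P n k = ((n - k : ℚ) / n) * P (n - 1) (k - 1) + ((k + 1 : ℚ) / n) * P (n - 1) k) :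
    ∀ n k : ℕ, 1 ≤ n → k ≤ n - 1 →
      P n k = (eulerian n k : ℚ) / Nat.factorial n := by
  intro n
  induction n with
  | zero => intro k h; omega
  | succ m ih =>
    intro k _ hk
    match m, ih, hk with
    | 0, ih, hk =>
        interval_cases k
        rw [hP1, IDLA.eulerian_zero 1]
        norm_num
    | (m+1), ih, hk =>
        have hfac : ((m+2).factorial : ℚ) = (m+2) * ((m+1).factorial : ℚ) := by
          rw [Nat.factorial_succ]
          push_cast
          ring
        have hfacne : ((m+1).factorial : ℚ) ≠ 0 := by
          exact_mod_cast Nat.factorial_ne_zero (m+1)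
        have hm2 : ((m : ℚ) + 2) ≠ 0 := by positivity
        rcases Nat.eq_zero_or_pos k with rfl | hkpos
        · rw [hPleft (m+2) (by omega)]
          try simp only [show m + 2 - 1 = m + 1 from rfl, Nat.add_sub_cancel]
          rw [ih 0 (by omega) (by omega), IDLA.eulerian_zero (m+1),
            IDLA.eulerian_zero (m+2)]
          rw [hfac]
          push_cast
          field_simp
        · rcases Nat.lt_or_ge k (m+1) with hklt | hkge
          · -- middle case : 1 ≤ k ≤ m
            obtain ⟨j, rfl⟩ : ∃ j, k = j + 1 := ⟨k - 1, by omega⟩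
            have hrec := IDLA.eulerian_rec (m+1) j
            have h1 := ih (j+1) (by omega) (by omega)
            have h2 := ih j (by omega) (by omega)
            have hmid := hPmid (m+2) (j+1) (by omega) (by omega) (by omega)
            try simp only [show m + 2 - 1 = m + 1 from rfl, Nat.add_sub_cancel] at hmid
            rw [hmid, h1, h2, hrec]
            have hsub : ((m + 1 - j : ℕ) : ℚ) = (m : ℚ) + 1 - j := by
              have : (j : ℕ) ≤ m + 1 := by omega
              push_cast [Nat.cast_sub this]
              ring
            rw [hfac]
            push_cast [hsub]
            have h2c : ((m : ℚ) + 2) - ((j : ℚ) + 1) = (m : ℚ) + 1 - j := by ring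
            field_simp
            ring
          · -- right edge : k = m+1
            have hkeq : k = m + 1 := by omega
            subst hkeq
            have hpr := hPright (m+2) (by omega)
            try simp only [show m + 2 - 1 = m + 1 from rfl, show m + 2 - 2 = m from rfl] at hpr
            rw [hpr, ih m (by omega) (by omega), IDLA.eulerian_last m,
              IDLA.eulerian_last (m+1), hfac]
            push_cast
            field_simp
end

section
/- With P defined by the internal DLA recurrence, P is symmetric: P(n,k) = P(n, n-1-k) for all n ≥ 1 and 0 ≤ k ≤ n-1. -/
/-! Induction on the row. Symmetry of row `m` identifies `P m 0` with `P m (m - 1)`, so the two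
boundary recurrences give equal ends of row `m + 1`. In the interior, reflecting `k ↦ m - k`
exchanges the two terms of the recurrence together with their weights `m + 1 - k` and `k + 1`. -/

namespace InternalDLA

variable {P : ℕ → ℕ → ℚ}

theorem succ_zero_eq_succ_last
    (hPleft : ∀ n : ℕ, 2 ≤ n → P n 0 = P (n - 1) 0 / n)
    (hPright : ∀ n : ℕ, 2 ≤ n → P n (n - 1) = P (n - 1) (n - 2) / n)
    {m : ℕ} (hm : 1 ≤ m) (hsymm : P m 0 = P m (m - 1)) :
    P (m + 1) 0 = P (m + 1) m := by
  have hleft := hPleft (m + 1) (by omega)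
  have hright := hPright (m + 1) (by omega)
  rw [Nat.add_sub_cancel, show m + 1 - 2 = m - 1 by omega] at hright
  rw [Nat.add_sub_cancel] at hleft
  rw [hleft, hright, hsymm]

theorem succ_mid_eq_succ_reflect
    (hPmid : ∀ n k : ℕ, 2 ≤ n → 1 ≤ k → k ≤ n - 2 →
      P n k = ((n - k : ℚ) / n) * P (n - 1) (k - 1) + ((k + 1 : ℚ) / n) * P (n - 1) k)
    {m k : ℕ} (hk₁ : 1 ≤ k) (hkm : k + 1 ≤ m)
    (hsymm : ∀ j, j ≤ m - 1 → P m j = P m (m - 1 - j)) :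
    P (m + 1) k = P (m + 1) (m - k) := by
  have hk := hPmid (m + 1) k (by omega) hk₁ (by omega)
  have hk' := hPmid (m + 1) (m - k) (by omega) (by omega) (by omega)
  have hsymm_k : P m k = P m (m - k - 1) := by
    rw [hsymm k (by omega), Nat.sub_right_comm]
  have hsymm_pred : P m (k - 1) = P m (m - k) := by
    rw [hsymm (k - 1) (by omega), show m - 1 - (k - 1) = m - k by omega]
  rw [Nat.add_sub_cancel] at hk hk'
  rw [hk, hk', hsymm_k, hsymm_pred, Nat.cast_sub (by omega : k ≤ m)]
  push_cast
  ring

theorem succ_symm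
    (hPleft : ∀ n : ℕ, 2 ≤ n → P n 0 = P (n - 1) 0 / n)
    (hPright : ∀ n : ℕ, 2 ≤ n → P n (n - 1) = P (n - 1) (n - 2) / n)
    (hPmid : ∀ n k : ℕ, 2 ≤ n → 1 ≤ k → k ≤ n - 2 →
      P n k = ((n - k : ℚ) / n) * P (n - 1) (k - 1) + ((k + 1 : ℚ) / n) * P (n - 1) k) :
    ∀ m k : ℕ, k ≤ m → P (m + 1) k = P (m + 1) (m - k) := by
  intro m
  induction m with
  | zero => intro k hk; obtain rfl : k = 0 := (by omega); rfl
  | succ m ih =>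
    have hends := succ_zero_eq_succ_last hPleft hPright (Nat.le_add_left 1 m) (by simpa using ih 0)
    intro k hk
    rcases Nat.eq_zero_or_pos k with rfl | hk₀
    · simpa using hends
    rcases hk.lt_or_eq with hk' | rfl
    · exact succ_mid_eq_succ_reflect hPmid hk₀ hk' (by simpa using ih)
    · simpa using hends.symm

end InternalDLA

theorem internalDLA_prob_symmetric_general (P : ℕ → ℕ → ℚ)
    (hPleft : ∀ n : ℕ, 2 ≤ n → P n 0 = P (n - 1) 0 / n)
    (hPright : ∀ n : ℕ, 2 ≤ n → P n (n - 1) = P (n - 1) (n - 2) / n)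
    (hPmid : ∀ n k : ℕ, 2 ≤ n → 1 ≤ k → k ≤ n - 2 →
      P n k = ((n - k : ℚ) / n) * P (n - 1) (k - 1) + ((k + 1 : ℚ) / n) * P (n - 1) k) :
    ∀ n k : ℕ, 1 ≤ n → k ≤ n - 1 → P n k = P n (n - 1 - k) := by
  intro n k hn hk
  obtain ⟨m, rfl⟩ : ∃ m, n = m + 1 := ⟨n - 1, by omega⟩
  simpa using InternalDLA.succ_symm hPleft hPright hPmid m k (by simpa using hk)

theorem internalDLA_prob_symmetric (P : ℕ → ℕ → ℚ)
    (hP1 : P 1 0 = 1)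
    (hPleft : ∀ n : ℕ, 2 ≤ n → P n 0 = P (n - 1) 0 / n)
    (hPright : ∀ n : ℕ, 2 ≤ n → P n (n - 1) = P (n - 1) (n - 2) / n)
    (hPmid : ∀ n k : ℕ, 2 ≤ n → 1 ≤ k → k ≤ n - 2 →
      P n k = ((n - k : ℚ) / n) * P (n - 1) (k - 1) + ((k + 1 : ℚ) / n) * P (n - 1) k) :
    ∀ n k : ℕ, 1 ≤ n → k ≤ n - 1 → P n k = P n (n - 1 - k) :=
  internalDLA_prob_symmetric_general P hPleft hPright hPmid
end
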